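/- arXiv:2411.05726 — 10 statements merged into one kernel-verified Lean document; each statement's English description precedes it below -/
import Mathlib

section
/- Every nonempty inversion sequence τ equals child(σ,Z) for exactly one pair (σ,Z) where σ is an inversion sequence and Z ⊆ Zeros(σ); namely σ is obtained by deleting the first entry of τ and subtracting 1 from all positive entries, and Z is the set of positions where τ (shifted) has value 1. -/
def child {n : ℕ} (σ : Fin n → ℕ) (Z : Finset (Fin n)) : Fin (n + 1) → ℕ :=
  Fin.cases 0 (fun i => σ i + (if 0 < σ i then 1 else 0) + (if i ∈ Z then 1 else 0))

/-- Every nonempty inversion sequence `τ` is `child σ Z` for exactly one pair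
`(σ, Z)` with `σ` an inversion sequence and `Z` a subset of the zeros of `σ`;
namely `σ` is obtained by deleting the first entry of `τ` and subtracting 1 from
all positive entries, and `Z` is the set of positions where the shifted `τ` has
value 1. -/
theorem child_unique_parent (n : ℕ) (τ : Fin (n + 1) → ℕ)
    (hτ : ∀ j, τ j ≤ j.val) :
    letI σ₀ : Fin n → ℕ := fun i => τ i.succ - 1
    letI Z₀ : Finset (Fin n) := Finset.univ.filter fun i => τ i.succ = 1
    ((∀ i, σ₀ i ≤ i.val) ∧ (∀ i ∈ Z₀, σ₀ i = 0) ∧ child σ₀ Z₀ = τ) ∧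
      (∀ (σ : Fin n → ℕ) (Z : Finset (Fin n)),
        (∀ i, σ i ≤ i.val) → (∀ i ∈ Z, σ i = 0) → child σ Z = τ →
          σ = σ₀ ∧ Z = Z₀) := by
  set σ₀ : Fin n → ℕ := fun i => τ i.succ - 1 with hσ0
  set Z₀ : Finset (Fin n) := Finset.univ.filter fun i => τ i.succ = 1 with hZ0
  have hτ0 : τ 0 = 0 := Nat.le_zero.mp (hτ 0)
  constructor
  · refine ⟨fun i => ?_, fun i hi => ?_, ?_⟩
    · have := hτ i.succ
      simp only [Fin.val_succ] at this
      simp only [hσ0]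
      omega
    · simp only [hZ0, Finset.mem_filter] at hi
      simp [hσ0, hi.2]
    · funext j
      induction j using Fin.cases with
      | zero => simp [child, hτ0]
      | succ i =>
        simp only [child, Fin.cases_succ, hσ0, hZ0, Finset.mem_filter, Finset.mem_univ,
          true_and]
        rcases Nat.lt_or_ge (τ i.succ) 2 with h | h
        · interval_cases h : τ i.succ <;> simp
        · have h1 : ¬ τ i.succ = 1 := by omega
          simp only [h1, if_false]
          rw [if_pos (by omega)]
          omega
  · intro σ Z hσ hZ hchild
    have key : ∀ i : Fin n, τ i.succ = σ i + (if 0 < σ i then 1 else 0) +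
        (if i ∈ Z then 1 else 0) := by
      intro i
      rw [← hchild]
      simp [child]
    have hσeq : σ = σ₀ := by
      funext i
      have := key i
      rcases Nat.eq_zero_or_pos (σ i) with h0 | h0
      · have : τ i.succ = if i ∈ Z then 1 else 0 := by simp [h0] at this; simpa [h0]
        simp only [hσ0, this, h0]
        split <;> simp
      · have hnZ : i ∉ Z := fun hm => by have := hZ i hm; omega
        simp only [if_pos h0, if_neg hnZ] at this
        simp only [hσ0]
        omega
    refine ⟨hσeq, ?_⟩
    ext i
    simp only [hZ0, Finset.mem_filter, Finset.mem_univ, true_and]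
    have := key i
    rcases Nat.eq_zero_or_pos (σ i) with h0 | h0
    · simp only [h0, Nat.lt_irrefl, if_false] at this
      constructor
      · intro hm
        simp [hm] at this
        omega
      · intro h1
        by_contra hm
        simp [hm] at this
        omega
    · have hnZ : i ∉ Z := fun hm => by have := hZ i hm; omega
      simp only [if_pos h0, if_neg hnZ] at this
      constructor
      · intro hm; exact absurd hm hnZ
      · intro h1; omega
end

section
/- An inversion sequence σ has exactly 2^{|Zeros(σ)|} children in the generating tree growing on the left; that is, the map Z ↦ child(σ,Z) is injective on subsets of Zeros(σ). -/
lemma child_inj {n : ℕ} (σ : Fin n → ℕ) :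
    Set.InjOn (fun Z : Finset (Fin n) => child σ Z)
      {Z : Finset (Fin n) | ∀ i ∈ Z, σ i = 0} := by
  intro Z₁ h₁ Z₂ h₂ h
  ext i
  have := congrFun h i.succ
  simp only [child, Fin.cases_succ] at this
  constructor
  · intro hi
    by_contra hi2
    have hz : σ i = 0 := h₁ i hi
    simp [hz, hi, hi2] at this
  · intro hi
    by_contra hi2
    have hz : σ i = 0 := h₂ i hi
    simp [hz, hi, hi2] at this

/-- An inversion sequence has exactly `2 ^ |Zeros σ|` children in the generating
tree growing on the left: the map `Z ↦ child σ Z` is injective on subsets of the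
zeros of `σ`, and the set of children has cardinality `2 ^ |Zeros σ|`. -/
theorem card_children (n : ℕ) (σ : Fin n → ℕ) (hσ : ∀ i, σ i ≤ i.val) :
    Set.InjOn (fun Z : Finset (Fin n) => child σ Z)
      {Z : Finset (Fin n) | ∀ i ∈ Z, σ i = 0} ∧
    (((Finset.univ.filter fun i => σ i = 0).powerset.image
        fun Z => child σ Z).card
      = 2 ^ (Finset.univ.filter fun i => σ i = 0).card) := by
  refine ⟨child_inj σ, ?_⟩
  rw [Finset.card_image_of_injOn, Finset.card_powerset]
  intro Z₁ h₁ Z₂ h₂ h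
  refine child_inj σ ?_ ?_ h <;>
    simp only [Finset.mem_coe, Finset.mem_powerset] at h₁ h₂ <;>
    intro i hi <;> [have := h₁ hi; have := h₂ hi] <;>
    simpa using this
end

section
/- Let ρ be a pattern of length k ≥ 1 which contains exactly one zero. If an inversion sequence σ contains an occurrence of ρ, then every child τ = child(σ,Z) of σ in the generating tree growing on the left also contains an occurrence of ρ. -/
/-- `σ` contains the pattern `ρ`: some subsequence of `σ` is order-isomorphic
(with equalities preserved) to `ρ`. -/
def Contains {n k : ℕ} (σ : Fin n → ℕ) (ρ : Fin k → ℕ) : Prop :=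
  ∃ q : Fin k → Fin n, StrictMono q ∧ ∀ a b, ρ a < ρ b ↔ σ (q a) < σ (q b)

theorem contains_child_of_single_zero (k n : ℕ) (hk : 1 ≤ k) (ρ : Fin k → ℕ)
    (hpat : ∃ m, Set.range ρ = Set.Iic m)
    (hzero : ∃! i, ρ i = 0)
    (σ : Fin n → ℕ) (hσ : ∀ i, σ i ≤ i.val)
    (hcont : Contains σ ρ)
    (Z : Finset (Fin n)) (hZ : ∀ i ∈ Z, σ i = 0) :
    Contains (child σ Z) ρ := by
  obtain ⟨q, hq, hiff⟩ := hcont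
  obtain ⟨a₀, ha₀, huniq⟩ := hzero
  have hmin : ∀ b, b ≠ a₀ → σ (q a₀) < σ (q b) := by
    intro b hb
    have hρb : ρ b ≠ 0 := fun h => hb (huniq b h)
    exact (hiff a₀ b).mp (by omega)
  set T : Fin k → ℕ := fun a => child σ Z (q a).succ with hT
  have hTne : ∀ b, b ≠ a₀ → T b = σ (q b) + 1 := by
    intro b hb
    have hpos : 0 < σ (q b) := Nat.lt_of_le_of_lt (Nat.zero_le _) (hmin b hb)
    have hnz : q b ∉ Z := fun h => by have := hZ _ h; omega
    simp [hT, child, hpos, hnz]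
  have hTa : σ (q a₀) ≤ T a₀ ∧ T a₀ ≤ σ (q a₀) + 1 := by
    by_cases hmem : q a₀ ∈ Z
    · have h0 := hZ _ hmem
      simp [hT, child, hmem, h0]
    · simp only [hT, child, Fin.cases_succ, if_neg hmem]
      split_ifs <;> omega
  refine ⟨fun a => (q a).succ, fun a b hab => Fin.succ_lt_succ_iff.mpr (hq hab), ?_⟩
  intro a b
  show ρ a < ρ b ↔ T a < T b
  by_cases ha : a = a₀ <;> by_cases hb : b = a₀
  · subst ha; subst hb; simp
  · subst ha
    have h1 := hmin b hb
    have h2 := hTne b hb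
    have hρb : ρ b ≠ 0 := fun h => hb (huniq b h)
    omega
  · subst hb
    have h1 := hmin a ha
    have h2 := hTne a ha
    have hρa : ρ a ≠ 0 := fun h => ha (huniq a h)
    constructor
    · intro h; omega
    · intro h; omega
  · have h1 := hTne a ha
    have h2 := hTne b hb
    have h3 := hiff a b
    omega
end

section
/- Let ρ be a pattern of length k ≥ 2 which contains exactly two zeros, both located at positions 1 and 2 (so ρ begins with 0,0). If an inversion sequence σ contains an occurrence of ρ, then every child τ = child(σ,Z) of σ also contains an occurrence of ρ. -/
theorem contains_child_of_two_leading_zeros (k n : ℕ) (hk : 2 ≤ k)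
    (ρ : Fin k → ℕ)
    (hpat : ∃ m, Set.range ρ = Set.Iic m)
    (h0 : ρ ⟨0, by omega⟩ = 0) (h1 : ρ ⟨1, by omega⟩ = 0)
    (honly : ∀ i : Fin k, ρ i = 0 → i.val = 0 ∨ i.val = 1)
    (σ : Fin n → ℕ) (hσ : ∀ i, σ i ≤ i.val)
    (hcont : Contains σ ρ)
    (Z : Finset (Fin n)) (hZ : ∀ i ∈ Z, σ i = 0) :
    Contains (child σ Z) ρ := by
  obtain ⟨q, hqm, hiso⟩ := hcont
  have hk0 : 0 < k := by omega
  have hk1 : 1 < k := by omega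
  have hρ0 : ∀ c : Fin k, c.val < 2 → ρ c = 0 := by
    intro c hc
    by_cases h' : c.val = 0
    · have hc0 : c = (⟨0, hk0⟩ : Fin k) := Fin.ext h'
      rw [hc0]; exact h0
    · have hc1 : c = (⟨1, hk1⟩ : Fin k) := Fin.ext (show c.val = 1 by omega)
      rw [hc1]; exact h1
  have hρpos : ∀ a : Fin k, 2 ≤ a.val → 0 < ρ a := by
    intro a ha
    rcases Nat.eq_zero_or_pos (ρ a) with h | h
    · rcases honly a h with h' | h' <;> omega
    · exact h
  have hσ01 : σ (q ⟨0, hk0⟩) = σ (q ⟨1, hk1⟩) := by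
    have h1' := hiso ⟨0, hk0⟩ ⟨1, hk1⟩
    have h2' := hiso ⟨1, hk1⟩ ⟨0, hk0⟩
    rw [hρ0 ⟨0, hk0⟩ (by simp), hρ0 ⟨1, hk1⟩ (by simp)] at h1' h2'
    omega
  have hlt : ∀ a : Fin k, 2 ≤ a.val → σ (q ⟨0, hk0⟩) < σ (q a) := by
    intro a ha
    refine (hiso ⟨0, hk0⟩ a).mp ?_
    rw [hρ0 ⟨0, hk0⟩ (by simp)]
    exact hρpos a ha
  have hsucc : ∀ i : Fin n, child σ Z i.succ
      = σ i + (if 0 < σ i then 1 else 0) + (if i ∈ Z then 1 else 0) := by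
    intro i; simp [child]
  by_cases hpos : 0 < σ (q ⟨0, hk0⟩)
  · -- all values at embedded positions are positive
    have key : ∀ a, child σ Z (q a).succ = σ (q a) + 1 := by
      intro a
      have hp : 0 < σ (q a) := by
        by_cases h2 : 2 ≤ a.val
        · have := hlt a h2; omega
        · by_cases h' : a.val = 0
          · have : a = (⟨0, hk0⟩ : Fin k) := Fin.ext h'
            rw [this]; exact hpos
          · have : a = (⟨1, hk1⟩ : Fin k) := Fin.ext (show _ = 1 by omega)
            rw [this]; omega
      have hnz : q a ∉ Z := fun h => by have := hZ _ h; omega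
      simp only [hsucc]; simp [hp, hnz]
    refine ⟨fun a => (q a).succ, ?_, ?_⟩
    · intro a b hab
      exact Fin.succ_lt_succ_iff.mpr (hqm hab)
    · intro a b
      rw [key a, key b]
      have := hiso a b
      omega
  · -- σ (q 0) = σ (q 1) = 0
    have hz0 : σ (q ⟨0, hk0⟩) = 0 := by omega
    have hz1 : σ (q ⟨1, hk1⟩) = 0 := by omega
    have hbig : ∀ a : Fin k, 2 ≤ a.val →
        child σ Z (q a).succ = σ (q a) + 1 ∧ 2 ≤ child σ Z (q a).succ := by
      intro a ha
      have hp : 0 < σ (q a) := by have := hlt a ha; omega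
      have hnz : q a ∉ Z := fun h => by have := hZ _ h; omega
      have h2 : 2 ≤ σ (q a) + 1 := by have := hlt a ha; omega
      constructor
      · simp only [hsucc]; simp [hp, hnz]
      · simp only [hsucc]; simp [hp, hnz]; omega
    have hi01 : (⟨0, hk0⟩ : Fin k) < ⟨1, hk1⟩ := by
      rw [Fin.lt_def]; simp
    obtain ⟨p0, p1, hp01, hp1, hveq, hvle⟩ :
        ∃ p0 p1 : Fin (n + 1), p0 < p1 ∧ p1.val ≤ (q ⟨1, hk1⟩).val + 1 ∧
          child σ Z p0 = child σ Z p1 ∧ child σ Z p0 ≤ 1 := by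
      have hv0 : child σ Z (q ⟨0, hk0⟩).succ
          = (if q ⟨0, hk0⟩ ∈ Z then 1 else 0) := by
        simp only [hsucc]; simp [hz0]
      have hv1 : child σ Z (q ⟨1, hk1⟩).succ
          = (if q ⟨1, hk1⟩ ∈ Z then 1 else 0) := by
        simp only [hsucc]; simp [hz1]
      have hq01 : (q ⟨0, hk0⟩).val < (q ⟨1, hk1⟩).val :=
        Fin.lt_def.mp (hqm hi01)
      have hzero : child σ Z 0 = 0 := by simp [child]
      by_cases hb : q ⟨1, hk1⟩ ∈ Z
      · by_cases ha : q ⟨0, hk0⟩ ∈ Z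
        · exact ⟨(q ⟨0, hk0⟩).succ, (q ⟨1, hk1⟩).succ,
            Fin.succ_lt_succ_iff.mpr (hqm hi01), le_refl _,
            by rw [hv0, hv1]; simp [ha, hb], by rw [hv0]; simp [ha]⟩
        · refine ⟨0, (q ⟨0, hk0⟩).succ, Fin.succ_pos _, ?_, ?_, ?_⟩
          · simp [Fin.val_succ]; omega
          · rw [hzero, hv0]; simp [ha]
          · rw [hzero]; omega
      · refine ⟨0, (q ⟨1, hk1⟩).succ, Fin.succ_pos _, le_refl _, ?_, ?_⟩
        · rw [hzero, hv1]; simp [hb]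
        · rw [hzero]; omega
    set q' : Fin k → Fin (n + 1) :=
      fun a => if a.val = 0 then p0 else if a.val = 1 then p1 else (q a).succ with hq'
    have hbigq' : ∀ a : Fin k, 2 ≤ a.val → q' a = (q a).succ := by
      intro a ha
      have h0' : ¬ a.val = 0 := by omega
      have h1' : ¬ a.val = 1 := by omega
      simp [hq', h0', h1']
    have hvsmall : ∀ a : Fin k, a.val < 2 → child σ Z (q' a) = child σ Z p0 := by
      intro a ha
      by_cases h' : a.val = 0
      · simp [hq', h']
      · have h1' : a.val = 1 := by omega
        simp [hq', h', h1']
        exact hveq.symm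
    refine ⟨q', ?_, ?_⟩
    · intro a b hab
      have hab' : a.val < b.val := Fin.lt_def.mp hab
      rcases Nat.lt_or_ge b.val 2 with hb2 | hb2
      · have hb1 : b.val = 1 := by omega
        have ha0 : a.val = 0 := by omega
        simpa [hq', ha0, hb1] using hp01
      · have hq1b : (q ⟨1, hk1⟩).val < (q b).val :=
          Fin.lt_def.mp (hqm (show (⟨1, hk1⟩ : Fin k) < b from
            Fin.lt_def.mpr (show (1 : ℕ) < b.val by omega)))
        rcases Nat.lt_or_ge a.val 2 with ha2 | ha2
        · have hle : (q' a).val ≤ p1.val := by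
            by_cases h' : a.val = 0
            · simp [hq', h']
              exact le_of_lt (Fin.lt_def.mp hp01)
            · have h1' : a.val = 1 := by omega
              simp [hq', h', h1']
          rw [hbigq' b hb2]
          have hsv : ((q b).succ).val = (q b).val + 1 := rfl
          rw [Fin.lt_def, hsv]
          omega
        · rw [hbigq' a ha2, hbigq' b hb2]
          exact Fin.succ_lt_succ_iff.mpr (hqm hab)
    · intro a b
      rcases Nat.lt_or_ge a.val 2 with ha2 | ha2 <;>
        rcases Nat.lt_or_ge b.val 2 with hb2 | hb2
      · rw [hρ0 a ha2, hρ0 b hb2, hvsmall a ha2, hvsmall b hb2]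
        omega
      · rw [hρ0 a ha2, hvsmall a ha2, hbigq' b hb2, (hbig b hb2).1]
        have h2 : 2 ≤ σ (q b) + 1 := (hbig b hb2).1 ▸ (hbig b hb2).2
        have := hρpos b hb2
        omega
      · rw [hρ0 b hb2, hvsmall b hb2, hbigq' a ha2, (hbig a ha2).1]
        have h2 : 2 ≤ σ (q a) + 1 := (hbig a ha2).1 ▸ (hbig a ha2).2
        omega
      · rw [hbigq' a ha2, hbigq' b hb2, (hbig a ha2).1, (hbig b hb2).1]
        have := hiso a b
        omega
end

section
/- Let ρ be a pattern of length k ≥ 2 which contains at least two zeros and has a zero to the right of a positive value. Then there exist inversion sequences σ and τ such that τ is a child of σ in the generating tree growing on the left, σ contains ρ, and τ avoids ρ. -/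
/-- The embedding of ρ after a prefix of m zeros. -/
def emb (m k : ℕ) (ρ : Fin k → ℕ) : Fin (m + k) → ℕ :=
  fun i => if h : i.val < m then 0 else ρ ⟨i.val - m, by have := i.isLt; omega⟩

lemma emb_pre {m k : ℕ} (ρ : Fin k → ℕ) (i : Fin (m + k)) (h : i.val < m) :
    emb m k ρ i = 0 := by simp [emb, h]

lemma emb_ge {m k : ℕ} (ρ : Fin k → ℕ) (i : Fin (m + k)) (h : ¬ i.val < m) :
    emb m k ρ i = ρ ⟨i.val - m, by have := i.isLt; omega⟩ := by
  simp [emb, h]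

lemma emb_block {m k : ℕ} (ρ : Fin k → ℕ) (j : Fin k) (h : m + j.val < m + k) :
    emb m k ρ ⟨m + j.val, h⟩ = ρ j := by
  rw [emb_ge ρ _ (Nat.not_lt.mpr (Nat.le_add_right m j.val))]
  congr 1
  apply Fin.ext
  simp

lemma child_zero_val {n : ℕ} (σ : Fin n → ℕ) (Z : Finset (Fin n)) (p : Fin (n + 1))
    (hp : p.val = 0) : child σ Z p = 0 := by
  have : p = 0 := Fin.ext (by simpa using hp)
  subst this
  simp [child]

lemma child_succ_val {n : ℕ} (σ : Fin n → ℕ) (Z : Finset (Fin n)) (p : Fin (n + 1))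
    (i : Fin n) (hp : p.val = i.val + 1) :
    child σ Z p = σ i + (if 0 < σ i then 1 else 0) + (if i ∈ Z then 1 else 0) := by
  have : p = i.succ := Fin.ext (by simpa using hp)
  subst this
  simp [child]

lemma strictMono_gap {k N : ℕ} (f : Fin k → Fin N) (hf : StrictMono f)
    (a b : Fin k) (d : ℕ) (hd : b.val = a.val + d) :
    b.val + (f a).val ≤ a.val + (f b).val := by
  induction d generalizing b with
  | zero =>
    have : b = a := Fin.ext (by omega)
    subst this; omega
  | succ d ih =>
    have hb' : a.val + d < k := by have := b.isLt; omega
    have h1 := ih ⟨a.val + d, hb'⟩ rfl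
    have h2 : f ⟨a.val + d, hb'⟩ < f b := hf (by rw [Fin.lt_def]; simp; omega)
    rw [Fin.lt_def] at h2
    simp only [] at h1
    omega

theorem exists_parent_containing_child_avoiding (k : ℕ) (hk : 2 ≤ k)
    (ρ : Fin k → ℕ)
    (hpat : ∃ m, Set.range ρ = Set.Iic m)
    (h2z : ∃ i j : Fin k, i ≠ j ∧ ρ i = 0 ∧ ρ j = 0)
    (hright : ∃ i j : Fin k, i < j ∧ 0 < ρ i ∧ ρ j = 0) :
    ∃ (n : ℕ) (σ : Fin n → ℕ) (Z : Finset (Fin n)),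
      (∀ i, σ i ≤ i.val) ∧ (∀ i ∈ Z, σ i = 0) ∧
      Contains σ ρ ∧ ¬ Contains (child σ Z) ρ := by
  classical
  obtain ⟨m, hm⟩ := hpat
  obtain ⟨z1, z2, hz12, hz1, hz2⟩ := h2z
  obtain ⟨is, js, hij, hipos, hjz⟩ := hright
  have hρle : ∀ j, ρ j ≤ m := fun j => by
    have : ρ j ∈ Set.Iic m := by rw [← hm]; exact Set.mem_range_self j
    exact this
  -- the last zero of ρ
  have hne0 : ((Finset.univ.filter fun j => ρ j = 0) : Finset (Fin k)).Nonempty :=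
    ⟨z1, by simp [hz1]⟩
  set jl := (Finset.univ.filter fun j => ρ j = 0).max' hne0 with hjldef
  have hjl0 : ρ jl = 0 := by
    have := Finset.max'_mem _ hne0
    simpa using this
  have hjlmax : ∀ j, ρ j = 0 → j ≤ jl := fun j hj => Finset.le_max' _ _ (by simp [hj])
  -- the first positive of ρ
  have hnep : ((Finset.univ.filter fun j => 0 < ρ j) : Finset (Fin k)).Nonempty :=
    ⟨is, by simp [hipos]⟩
  set i0 := (Finset.univ.filter fun j => 0 < ρ j).min' hnep with hi0def
  have hi00 : 0 < ρ i0 := by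
    have := Finset.min'_mem _ hnep
    simpa using this
  have hi0min : ∀ j, 0 < ρ j → i0 ≤ j := fun j hj => Finset.min'_le _ _ (by simp [hj])
  have hi0jl : i0 < jl := lt_of_le_of_lt (hi0min is hipos) (lt_of_lt_of_le hij (hjlmax js hjz))
  have hjlk := jl.isLt
  refine ⟨m + k, emb m k ρ, {⟨m + jl.val, by omega⟩}, ?_, ?_, ?_, ?_⟩
  · -- inversion sequence
    intro i
    by_cases h : i.val < m
    · rw [emb_pre ρ i h]; exact Nat.zero_le _
    · have : emb m k ρ i = ρ ⟨i.val - m, by have := i.isLt; omega⟩ := by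
        simp [emb, h]
      rw [this]
      have := hρle ⟨i.val - m, by have := i.isLt; omega⟩
      omega
  · -- Z consists of zeros
    intro i hi
    rw [Finset.mem_singleton] at hi
    subst hi
    rw [emb_block ρ jl (by omega)]
    exact hjl0
  · -- σ contains ρ
    refine ⟨fun j => ⟨m + j.val, by have := j.isLt; omega⟩, ?_, ?_⟩
    · intro a b hab
      rw [Fin.lt_def]
      simp only []
      have := Fin.lt_def.mp hab
      omega
    · intro a b
      rw [emb_block ρ a (by have := a.isLt; omega), emb_block ρ b (by have := b.isLt; omega)]
  · -- child avoids ρ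
    rintro ⟨q, hqm, hq⟩
    set Zs : Finset (Fin (m + k)) := {⟨m + jl.val, by omega⟩} with hZsdef
    set τ := child (emb m k ρ) Zs with hτdef
    have hτ0 : ∀ p : Fin (m + k + 1), p.val ≤ m → τ p = 0 := by
      intro p hp
      rw [hτdef]
      rcases Nat.eq_zero_or_pos p.val with h | h
      · exact child_zero_val _ _ p h
      · have hik : p.val - 1 < m + k := by have := p.isLt; omega
        rw [child_succ_val _ _ p ⟨p.val - 1, hik⟩ (by simp; omega)]
        have h1 : emb m k ρ ⟨p.val - 1, hik⟩ = 0 := emb_pre ρ _ (by simp; omega)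
        have h2 : (⟨p.val - 1, hik⟩ : Fin (m + k)) ∉ Zs := by
          rw [hZsdef, Finset.mem_singleton]
          intro hcon
          have := congrArg Fin.val hcon
          simp at this
          omega
        simp [h1, h2]
    have hτb : ∀ (j : Fin k) (p : Fin (m + k + 1)), p.val = m + 1 + j.val →
        τ p = ρ j + (if 0 < ρ j then 1 else 0) + (if j = jl then 1 else 0) := by
      intro j p hp
      rw [hτdef]
      have hik : m + j.val < m + k := by have := j.isLt; omega
      rw [child_succ_val _ _ p ⟨m + j.val, hik⟩ (by simp; omega)]
      rw [emb_block ρ j hik]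
      congr 1
      by_cases hj : j = jl
      · subst hj
        rw [if_pos rfl, if_pos (by rw [hZsdef, Finset.mem_singleton])]
      · rw [if_neg hj, if_neg ?_]
        rw [hZsdef, Finset.mem_singleton]
        intro hcon
        apply hj
        apply Fin.ext
        have := congrArg Fin.val hcon
        simp at this
        omega
    have hpos : ∀ p : Fin (m + k + 1), 0 < τ p → ∃ j : Fin k, p.val = m + 1 + j.val := by
      intro p hp
      by_cases h : p.val ≤ m
      · rw [hτ0 p h] at hp; omega
      · exact ⟨⟨p.val - m - 1, by have := p.isLt; omega⟩, by simp; omega⟩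
    have veq : ∀ z : Fin k, ρ z = 0 → τ (q z) = τ (q jl) := by
      intro z hz
      have a := hq z jl
      have b := hq jl z
      rw [hz, hjl0] at a b
      omega
    have vlt : ∀ a : Fin k, 0 < ρ a → τ (q jl) < τ (q a) := by
      intro a ha
      exact (hq jl a).1 (by rw [hjl0]; exact ha)
    by_cases hv2 : 2 ≤ τ (q jl)
    · -- value of zeros is ≥ 2: everything maps into positive entries of the block
      have hall : ∀ a : Fin k, ∃ j : Fin k, (q a).val = m + 1 + j.val ∧ 0 < ρ j := by
        intro a
        have h2 : 2 ≤ τ (q a) := by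
          rcases Nat.eq_zero_or_pos (ρ a) with h | h
          · rw [veq a h]; exact hv2
          · have := vlt a h; omega
        obtain ⟨j, hj⟩ := hpos (q a) (by omega)
        refine ⟨j, hj, ?_⟩
        by_contra hρj
        rw [hτb j (q a) hj] at h2
        split_ifs at h2 <;> omega
      choose G hG hGpos using hall
      have hGinj : Function.Injective G := by
        intro a b hab
        have hval : (q a).val = (q b).val := by rw [hG a, hG b, hab]
        exact hqm.injective (Fin.ext hval)
      obtain ⟨a, ha⟩ := Finite.injective_iff_surjective.mp hGinj jl
      have := hGpos a
      rw [ha, hjl0] at this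
      omega
    by_cases hv1 : τ (q jl) = 1
    · -- value of zeros is 1: both zeros map to the unique 1-entry
      have hloc : ∀ z : Fin k, ρ z = 0 → (q z).val = m + 1 + jl.val := by
        intro z hz
        have h1 : τ (q z) = 1 := by rw [veq z hz, hv1]
        obtain ⟨j, hj⟩ := hpos (q z) (by omega)
        by_cases hjj : j = jl
        · rw [hj, hjj]
        · exfalso
          rw [hτb j (q z) hj, if_neg hjj] at h1
          split_ifs at h1 <;> omega
      have : q z1 = q z2 := Fin.ext (by rw [hloc z1 hz1, hloc z2 hz2])
      exact hz12 (hqm.injective this)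
    · -- value of zeros is 0
      have hv0 : τ (q jl) = 0 := by omega
      have hqi0 : 0 < τ (q i0) := by have := vlt i0 hi00; omega
      obtain ⟨j0, hj0⟩ := hpos (q i0) hqi0
      have hlt : q i0 < q jl := hqm hi0jl
      have hltv := Fin.lt_def.mp hlt
      have hj'k : (q jl).val - m - 1 < k := by have := (q jl).isLt; omega
      set j' : Fin k := ⟨(q jl).val - m - 1, hj'k⟩ with hj'def
      have hj'eq : (q jl).val = m + 1 + j'.val := by simp [hj'def]; omega
      have hρj' : ρ j' = 0 := by
        have e := hτb j' (q jl) hj'eq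
        rw [hv0] at e
        split_ifs at e <;> omega
      have hj'ne : j' ≠ jl := by
        intro hcon
        have e := hτb j' (q jl) hj'eq
        rw [hv0, if_pos hcon] at e
        split_ifs at e <;> omega
      have hj'lt : j'.val < jl.val := by
        have h1 : j' ≤ jl := hjlmax j' hρj'
        have h2 := Fin.le_def.mp h1
        rcases Nat.lt_or_ge j'.val jl.val with h | h
        · exact h
        · exact absurd (Fin.ext (by omega) : j' = jl) hj'ne
      have hgap := strictMono_gap q hqm i0 jl (jl.val - i0.val)
        (by have := Fin.lt_def.mp hi0jl; omega)
      have hj0lt : j0.val < i0.val := by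
        rw [hj0, hj'eq] at hgap
        have := Fin.lt_def.mp hi0jl
        omega
      have hρj0 : 0 < ρ j0 := by
        rw [hτb j0 (q i0) hj0] at hqi0
        by_contra h
        have hj0ne : j0 ≠ jl := by
          intro hcon
          have h1 := congrArg Fin.val hcon
          have := Fin.lt_def.mp hi0jl
          omega
        rw [if_neg hj0ne] at hqi0
        split_ifs at hqi0 <;> omega
      have := Fin.le_def.mp (hi0min j0 hρj0)
      omega
end

section
/- Let σ be an inversion sequence of size n avoiding the patterns 201 and 210, and let Z ⊆ Zeros(σ). Write L(σ) = {i : σ_j = 0 for all j ≤ i} for the leading zeros and R(σ) = Zeros(σ) \ L(σ). Then child(σ,Z) avoids both 201 and 210 if and only if Z ∩ R(σ) is either empty or equal to R(σ). -/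
def Contains201 {n : ℕ} (σ : Fin n → ℕ) : Prop :=
  ∃ i j k : Fin n, i < j ∧ j < k ∧ σ j < σ k ∧ σ k < σ i

def Contains210 {n : ℕ} (σ : Fin n → ℕ) : Prop :=
  ∃ i j k : Fin n, i < j ∧ j < k ∧ σ k < σ j ∧ σ j < σ i

/-- The set of zeros of `σ`. -/
def Zeros {n : ℕ} (σ : Fin n → ℕ) : Finset (Fin n) :=
  Finset.univ.filter fun i => σ i = 0

/-- The set of leading zeros of `σ`. -/
def LeadZeros {n : ℕ} (σ : Fin n → ℕ) : Finset (Fin n) :=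
  Finset.univ.filter fun i => ∀ j ≤ i, σ j = 0

/-
Avoiding both 201 and 210 means that no entry is followed by two distinct smaller entries, a
condition symmetric in those two. Passing from `σ` to `child σ Z` shifts the positive entries
up by one, preserving and reflecting their order, and turns each zero into `1` or `0`
according to membership in `Z`. Hence an occurrence in the child comes either from one in `σ`
or from two zeros after a positive entry, i.e. two elements of `R(σ)`, that `Z` separates; and
such a pair, after the positive entry preceding both, is an occurrence in the child.
-/

def Contains201Or210 {n : ℕ} (σ : Fin n → ℕ) : Prop :=
  ∃ i j k : Fin n, i < j ∧ i < k ∧ σ j ≠ σ k ∧ σ j < σ i ∧ σ k < σ i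

theorem contains201Or210_iff {n : ℕ} (σ : Fin n → ℕ) :
    Contains201Or210 σ ↔ Contains201 σ ∨ Contains210 σ := by
  constructor
  · rintro ⟨i, j, k, hij, hik, hσjk, hj, hk⟩
    have hjk : j ≠ k := fun h => hσjk (congrArg σ h)
    rcases lt_or_gt_of_ne hjk with h | h <;> rcases lt_or_gt_of_ne hσjk with hσ | hσ
    · exact Or.inl ⟨i, j, k, hij, h, hσ, hk⟩
    · exact Or.inr ⟨i, j, k, hij, h, hσ, hj⟩
    · exact Or.inr ⟨i, k, j, hik, h, hσ, hk⟩
    · exact Or.inl ⟨i, k, j, hik, h, hσ, hj⟩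
  · rintro (⟨i, j, k, hij, hjk, hσ, hk⟩ | ⟨i, j, k, hij, hjk, hσ, hj⟩)
    · exact ⟨i, j, k, hij, hij.trans hjk, hσ.ne, hσ.trans hk, hk⟩
    · exact ⟨i, j, k, hij, hij.trans hjk, hσ.ne', hj, hσ.trans hj⟩

theorem contains201Or210_iff_tail {n : ℕ} {τ : Fin (n + 1) → ℕ} (h0 : τ 0 = 0) :
    Contains201Or210 τ ↔ Contains201Or210 (fun i : Fin n => τ i.succ) := by
  constructor
  · rintro ⟨i, j, k, hij, hik, hjk, hj, hk⟩
    have hi : i ≠ 0 := by rintro rfl; omega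
    obtain ⟨p, rfl⟩ := Fin.exists_succ_eq.mpr hi
    obtain ⟨b, rfl⟩ := Fin.exists_succ_eq.mpr (Fin.ne_zero_of_lt hij)
    obtain ⟨c, rfl⟩ := Fin.exists_succ_eq.mpr (Fin.ne_zero_of_lt hik)
    exact ⟨p, b, c, Fin.succ_lt_succ_iff.mp hij, Fin.succ_lt_succ_iff.mp hik, hjk, hj, hk⟩
  · rintro ⟨p, b, c, hpb, hpc, hbc, hb, hc⟩
    exact ⟨p.succ, b.succ, c.succ, Fin.succ_lt_succ_iff.mpr hpb,
      Fin.succ_lt_succ_iff.mpr hpc, hbc, hb, hc⟩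

theorem Finset.inter_eq_empty_or_inter_eq_right_iff {α : Type*} [DecidableEq α]
    (s t : Finset α) :
    s ∩ t = ∅ ∨ s ∩ t = t ↔ ¬ ∃ a ∈ t, ∃ b ∈ t, a ∈ s ∧ b ∉ s := by
  rw [Finset.inter_eq_right, ← Finset.disjoint_iff_inter_eq_empty, Finset.disjoint_left]
  constructor
  · rintro (h | h) ⟨a, ha, b, hb, has, hbs⟩
    · exact h has ha
    · exact hbs (h hb)
  · intro h
    by_contra! hst
    obtain ⟨⟨a, has, ha⟩, hts⟩ := hst
    obtain ⟨b, hb, hbs⟩ := Finset.not_subset.mp hts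
    exact h ⟨a, ha, b, hb, has, hbs⟩

theorem mem_zeros_sdiff_leadZeros {n : ℕ} {σ : Fin n → ℕ} {i : Fin n} :
    i ∈ Zeros σ \ LeadZeros σ ↔ σ i = 0 ∧ ∃ j < i, 0 < σ j := by
  simp only [Finset.mem_sdiff, Zeros, LeadZeros, Finset.mem_filter, Finset.mem_univ,
    true_and, not_forall, Nat.pos_iff_ne_zero]
  constructor
  · rintro ⟨h0, j, hj, hne⟩
    exact ⟨h0, j, lt_of_le_of_ne hj (by rintro rfl; exact hne h0), hne⟩
  · rintro ⟨h0, j, hj, hne⟩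
    exact ⟨h0, j, hj.le, hne⟩

section Child

variable {n : ℕ} {σ : Fin n → ℕ} {Z : Finset (Fin n)}

@[simp]
theorem child_zero : child σ Z 0 = 0 := rfl

theorem child_succ (i : Fin n) :
    child σ Z i.succ = σ i + (if 0 < σ i then 1 else 0) + (if i ∈ Z then 1 else 0) := rfl

theorem child_succ_of_pos (hZ : Z ⊆ Zeros σ) {i : Fin n} (hi : 0 < σ i) :
    child σ Z i.succ = σ i + 1 := by
  have hiZ : i ∉ Z := fun h => by simpa [Zeros, hi.ne'] using hZ h
  simp [child_succ, hi, hiZ]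

theorem child_succ_of_eq_zero {i : Fin n} (hi : σ i = 0) :
    child σ Z i.succ = if i ∈ Z then 1 else 0 := by
  simp [child_succ, hi]

theorem child_succ_lt_child_succ (hZ : Z ⊆ Zeros σ) {a b : Fin n} (h : σ a < σ b) :
    child σ Z a.succ < child σ Z b.succ := by
  rw [child_succ_of_pos hZ (Nat.zero_le _ |>.trans_lt h)]
  rcases Nat.eq_zero_or_pos (σ a) with ha | ha
  · rw [child_succ_of_eq_zero ha]
    split_ifs <;> omega
  · rw [child_succ_of_pos hZ ha]
    omega

theorem lt_of_child_succ_lt (hZ : Z ⊆ Zeros σ) {a b : Fin n}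
    (h : child σ Z a.succ < child σ Z b.succ) (hb : 0 < σ b) : σ a < σ b := by
  rcases lt_trichotomy (σ a) (σ b) with hab | hab | hab
  · exact hab
  · rw [child_succ_of_pos hZ hb, child_succ_of_pos hZ (hab ▸ hb), hab] at h
    exact absurd h (lt_irrefl _)
  · exact absurd (child_succ_lt_child_succ hZ hab) h.not_gt

theorem Contains201Or210.child (hZ : Z ⊆ Zeros σ) (h : Contains201Or210 σ) :
    Contains201Or210 (child σ Z) := by
  rw [contains201Or210_iff_tail child_zero]
  obtain ⟨p, b, c, hpb, hpc, hbc, hb, hc⟩ := h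
  refine ⟨p, b, c, hpb, hpc, ?_, child_succ_lt_child_succ hZ hb, child_succ_lt_child_succ hZ hc⟩
  rcases lt_or_gt_of_ne hbc with h | h
  exacts [(child_succ_lt_child_succ hZ h).ne, (child_succ_lt_child_succ hZ h).ne']

theorem contains201Or210_child_of_mem_of_notMem (hZ : Z ⊆ Zeros σ) {b c : Fin n}
    (hbR : b ∈ Zeros σ \ LeadZeros σ) (hcR : c ∈ Zeros σ \ LeadZeros σ)
    (hbZ : b ∈ Z) (hcZ : c ∉ Z) : Contains201Or210 (child σ Z) := by
  rw [contains201Or210_iff_tail child_zero]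
  obtain ⟨hb0, p, hpb, hp⟩ := mem_zeros_sdiff_leadZeros.mp hbR
  obtain ⟨hc0, q, hqc, hq⟩ := mem_zeros_sdiff_leadZeros.mp hcR
  obtain ⟨r, hrb, hrc, hr⟩ : ∃ r, r < b ∧ r < c ∧ 0 < σ r := by
    rcases lt_or_gt_of_ne (show b ≠ c by rintro rfl; exact hcZ hbZ) with h | h
    exacts [⟨p, hpb, hpb.trans h, hp⟩, ⟨q, hqc.trans h, hqc, hq⟩]
  refine ⟨r, b, c, hrb, hrc, ?_⟩
  simp only [child_succ_of_eq_zero hb0, child_succ_of_eq_zero hc0,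
    child_succ_of_pos hZ hr, hbZ, hcZ, if_true, if_false]
  omega

theorem contains201Or210_child_iff (hZ : Z ⊆ Zeros σ) :
    Contains201Or210 (child σ Z) ↔ Contains201Or210 σ ∨
      ∃ b ∈ Zeros σ \ LeadZeros σ, ∃ c ∈ Zeros σ \ LeadZeros σ, b ∈ Z ∧ c ∉ Z := by
  refine ⟨fun h => ?_, ?_⟩
  · rw [contains201Or210_iff_tail child_zero] at h
    obtain ⟨p, b, c, hpb, hpc, hbc, hb, hc⟩ := h
    dsimp only at hbc hb hc
    have hp : 0 < σ p := by
      by_contra! hp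
      rw [child_succ_of_eq_zero (Nat.le_zero.mp hp)] at hb hc
      split_ifs at hb hc <;> omega
    by_cases hσbc : σ b = σ c
    · have hb0 : σ b = 0 := by
        by_contra hb0
        have hb0 := Nat.pos_of_ne_zero hb0
        rw [child_succ_of_pos hZ hb0, child_succ_of_pos hZ (hσbc ▸ hb0), hσbc] at hbc
        exact hbc rfl
      have hc0 : σ c = 0 := hσbc ▸ hb0
      have hbR := mem_zeros_sdiff_leadZeros.mpr ⟨hb0, p, hpb, hp⟩
      have hcR := mem_zeros_sdiff_leadZeros.mpr ⟨hc0, p, hpc, hp⟩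
      rw [child_succ_of_eq_zero hb0, child_succ_of_eq_zero hc0] at hbc
      right
      by_cases hbZ : b ∈ Z
      · exact ⟨b, hbR, c, hcR, hbZ, fun hcZ => hbc (by simp [hbZ, hcZ])⟩
      · exact ⟨c, hcR, b, hbR, by_contra fun hcZ => hbc (by simp [hbZ, hcZ]), hbZ⟩
    · exact Or.inl ⟨p, b, c, hpb, hpc, hσbc,
        lt_of_child_succ_lt hZ hb hp, lt_of_child_succ_lt hZ hc hp⟩
  · rintro (h | ⟨b, hbR, c, hcR, hbZ, hcZ⟩)
    exacts [h.child hZ, contains201Or210_child_of_mem_of_notMem hZ hbR hcR hbZ hcZ]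

end Child

theorem child_avoids_iff_general (n : ℕ) (σ : Fin n → ℕ)
    (h201 : ¬ Contains201 σ) (h210 : ¬ Contains210 σ)
    (Z : Finset (Fin n)) (hZ : Z ⊆ Zeros σ) :
    (¬ Contains201 (child σ Z) ∧ ¬ Contains210 (child σ Z)) ↔
      (Z ∩ (Zeros σ \ LeadZeros σ) = ∅ ∨
        Z ∩ (Zeros σ \ LeadZeros σ) = Zeros σ \ LeadZeros σ) := by
  have hσ : ¬ Contains201Or210 σ := by
    rw [contains201Or210_iff]
    exact not_or.mpr ⟨h201, h210⟩
  rw [← not_or, ← contains201Or210_iff, contains201Or210_child_iff hZ, or_iff_right hσ,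
    Finset.inter_eq_empty_or_inter_eq_right_iff]

theorem child_avoids_iff (n : ℕ) (σ : Fin n → ℕ) (hσ : ∀ i, σ i ≤ i.val)
    (h201 : ¬ Contains201 σ) (h210 : ¬ Contains210 σ)
    (Z : Finset (Fin n)) (hZ : Z ⊆ Zeros σ) :
    (¬ Contains201 (child σ Z) ∧ ¬ Contains210 (child σ Z)) ↔
      (Z ∩ (Zeros σ \ LeadZeros σ) = ∅ ∨
        Z ∩ (Zeros σ \ LeadZeros σ) = Zeros σ \ LeadZeros σ) :=
  child_avoids_iff_general n σ h201 h210 Z hZ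
end

section
/- Define push(σ) to be the sequence obtained from an inversion sequence σ by prepending a 0 and adding 1 to every nonzero entry. Then the image of the set of inversion sequences avoiding 010 and 102 under push equals the set of nonempty inversion sequences avoiding 010 and 102 that do not contain the value 1. -/
def Contains010 {n : ℕ} (σ : Fin n → ℕ) : Prop :=
  ∃ i j k : Fin n, i < j ∧ j < k ∧ σ i = σ k ∧ σ k < σ j

def Contains102 {n : ℕ} (σ : Fin n → ℕ) : Prop :=
  ∃ i j k : Fin n, i < j ∧ j < k ∧ σ j < σ i ∧ σ i < σ k

/-- `push σ` prepends a 0 and adds 1 to every nonzero entry. -/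
def push {n : ℕ} (σ : Fin n → ℕ) : Fin (n + 1) → ℕ :=
  Fin.cases 0 (fun i => σ i + if 0 < σ i then 1 else 0)

lemma push_zero {n : ℕ} (σ : Fin n → ℕ) : push σ 0 = 0 := rfl

lemma push_succ {n : ℕ} (σ : Fin n → ℕ) (i : Fin n) :
    push σ i.succ = σ i + if 0 < σ i then 1 else 0 := by
  simp [push]

lemma f_lt (x y : ℕ) :
    (x + if 0 < x then 1 else 0) < (y + if 0 < y then 1 else 0) ↔ x < y := by
  split_ifs <;> omega

lemma f_eq (x y : ℕ) :
    (x + if 0 < x then 1 else 0) = (y + if 0 < y then 1 else 0) ↔ x = y := by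
  split_ifs <;> omega

lemma exists_succ {n : ℕ} {a b : Fin (n+1)} (h : a < b) : ∃ b' : Fin n, b'.succ = b := by
  refine ⟨b.pred ?_, Fin.succ_pred _ _⟩
  rintro rfl
  exact Nat.not_lt_zero _ h

/-- The image under `push` of the `{010,102}`-avoiding inversion sequences of size
`n` is the set of (nonempty) `{010,102}`-avoiding inversion sequences of size
`n + 1` not containing the value 1. -/
theorem image_push (n : ℕ) :
    (fun σ : Fin n → ℕ => push σ) ''
        {σ | (∀ i, σ i ≤ i.val) ∧ ¬ Contains010 σ ∧ ¬ Contains102 σ}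
      = {τ : Fin (n + 1) → ℕ |
          (∀ j, τ j ≤ j.val) ∧ ¬ Contains010 τ ∧ ¬ Contains102 τ ∧
            ∀ j, τ j ≠ 1} := by
  ext τ
  simp only [Set.mem_image, Set.mem_setOf_eq]
  constructor
  · rintro ⟨σ, ⟨hinv, h010, h102⟩, rfl⟩
    refine ⟨?_, ?_, ?_, ?_⟩
    · intro j
      induction j using Fin.cases with
      | zero => simp [push_zero]
      | succ i =>
        rw [push_succ]
        have := hinv i
        have hv : (i.succ : Fin (n+1)).val = i.val + 1 := Fin.val_succ i
        rw [hv]; split_ifs <;> omega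
    · rintro ⟨a, b, c, hab, hbc, h1, h2⟩
      apply h010
      obtain ⟨b', rfl⟩ := exists_succ hab
      obtain ⟨c', rfl⟩ := exists_succ hbc
      rw [push_succ, push_succ] at h2
      rcases eq_or_ne a 0 with rfl | ha
      · rw [push_zero, push_succ] at h1
        have hc0 : σ c' = 0 := by split_ifs at h1 <;> omega
        have hb0 : 0 < σ b' := by rw [hc0] at h2; split_ifs at h2 <;> omega
        have hble := hinv b'
        refine ⟨⟨0, lt_of_le_of_lt (Nat.zero_le _) b'.isLt⟩, b', c', ?_, ?_, ?_, ?_⟩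
        · show (0 : ℕ) < b'.val; omega
        · exact (Fin.succ_lt_succ_iff).mp hbc
        · have h0 := hinv ⟨0, lt_of_le_of_lt (Nat.zero_le _) b'.isLt⟩
          simp at h0
          rw [h0, hc0]
        · rw [hc0]; exact hb0
      · obtain ⟨a', rfl⟩ := exists_succ (Fin.pos_iff_ne_zero.mpr ha)
        rw [push_succ, push_succ] at h1
        exact ⟨a', b', c', (Fin.succ_lt_succ_iff).mp hab, (Fin.succ_lt_succ_iff).mp hbc,
          (f_eq _ _).mp h1, (f_lt _ _).mp h2⟩
    · rintro ⟨a, b, c, hab, hbc, h1, h2⟩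
      apply h102
      obtain ⟨b', rfl⟩ := exists_succ hab
      obtain ⟨c', rfl⟩ := exists_succ hbc
      have ha : a ≠ 0 := by
        rintro rfl
        rw [push_zero] at h1
        exact Nat.not_lt_zero _ h1
      obtain ⟨a', rfl⟩ := exists_succ (Fin.pos_iff_ne_zero.mpr ha)
      rw [push_succ, push_succ] at h1
      rw [push_succ, push_succ] at h2
      exact ⟨a', b', c', (Fin.succ_lt_succ_iff).mp hab, (Fin.succ_lt_succ_iff).mp hbc,
        (f_lt _ _).mp h1, (f_lt _ _).mp h2⟩
    · intro j
      induction j using Fin.cases with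
      | zero => simp [push_zero]
      | succ i =>
        rw [push_succ]
        split_ifs <;> omega
  · rintro ⟨hinv, h010, h102, h1⟩
    refine ⟨fun i => τ i.succ - if 2 ≤ τ i.succ then 1 else 0, ⟨?_, ?_, ?_⟩, ?_⟩
    · intro i
      have := hinv i.succ
      have hv : (i.succ : Fin (n+1)).val = i.val + 1 := Fin.val_succ i
      rw [hv] at this
      have h1i := h1 i.succ
      show τ i.succ - (if 2 ≤ τ i.succ then 1 else 0) ≤ i.val
      split_ifs <;> omega
    · rintro ⟨a, b, c, hab, hbc, he, hl⟩
      simp only at he hl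
      apply h010
      refine ⟨a.succ, b.succ, c.succ, Fin.succ_lt_succ_iff.mpr hab,
        Fin.succ_lt_succ_iff.mpr hbc, ?_, ?_⟩
      · have h1a := h1 a.succ
        have h1c := h1 c.succ
        split_ifs at he <;> omega
      · have h1b := h1 b.succ
        have h1c := h1 c.succ
        split_ifs at hl <;> omega
    · rintro ⟨a, b, c, hab, hbc, he, hl⟩
      simp only at he hl
      apply h102
      refine ⟨a.succ, b.succ, c.succ, Fin.succ_lt_succ_iff.mpr hab,
        Fin.succ_lt_succ_iff.mpr hbc, ?_, ?_⟩
      · have h1a := h1 a.succ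
        have h1b := h1 b.succ
        split_ifs at he <;> omega
      · have h1a := h1 a.succ
        have h1c := h1 c.succ
        split_ifs at hl <;> omega
    · funext j
      induction j using Fin.cases with
      | zero =>
        have := hinv 0
        simp at this
        simp [push_zero, this]
      | succ i =>
        rw [push_succ]
        have := h1 i.succ
        split_ifs <;> omega
end

section
/- For all n ≥ 0, the number of inversion sequences of size n avoiding the patterns 010 and 102 equals the number of inversion sequences of size n+1 avoiding 010 and 102 that do not contain the value 1. -/
namespace CardAvoidAux

def g (v : ℕ) : ℕ := if v = 0 then 0 else v + 1

lemma g_lt_iff {a b : ℕ} : g a < g b ↔ a < b := by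
  unfold g; split_ifs <;> simp_all <;> omega

lemma g_eq_iff {a b : ℕ} : g a = g b ↔ a = b := by
  unfold g; split_ifs <;> simp_all <;> omega

lemma g_ne_one (v : ℕ) : g v ≠ 1 := by unfold g; split_ifs <;> simp_all <;> omega

lemma g_le (v : ℕ) : g v ≤ v + 1 := by unfold g; split_ifs <;> simp_all <;> omega

lemma g_eq_zero {v : ℕ} : g v = 0 ↔ v = 0 := by unfold g; split_ifs <;> simp_all <;> omega

lemma g_sub_one (v : ℕ) : g v - 1 = v := by unfold g; split_ifs <;> simp_all <;> omega

lemma g_of_sub_one {w : ℕ} (hw : w ≠ 1) : g (w - 1) = w := by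
  unfold g; split_ifs <;> simp_all <;> omega

lemma h_lt_iff {a b : ℕ} (ha : a ≠ 1) (hb : b ≠ 1) : a - 1 < b - 1 ↔ a < b := by omega

lemma h_eq_iff {a b : ℕ} (ha : a ≠ 1) (hb : b ≠ 1) : a - 1 = b - 1 ↔ a = b := by omega

def F {n : ℕ} (σ : Fin n → ℕ) : Fin (n + 1) → ℕ :=
  fun j => Fin.cases 0 (fun i => g (σ i)) j

def G {n : ℕ} (τ : Fin (n + 1) → ℕ) : Fin n → ℕ :=
  fun i => τ i.succ - 1

@[simp] lemma F_zero {n : ℕ} (σ : Fin n → ℕ) : F σ 0 = 0 := rfl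

@[simp] lemma F_succ {n : ℕ} (σ : Fin n → ℕ) (i : Fin n) : F σ i.succ = g (σ i) := rfl

lemma not010_F {n : ℕ} {σ : Fin n → ℕ} (hb : ∀ i, σ i ≤ i.val)
    (h0 : ¬ Contains010 σ) : ¬ Contains010 (F σ) := by
  rintro ⟨i, j, k, hij, hjk, heq, hlt⟩
  obtain ⟨j', rfl⟩ := Fin.exists_succ_eq.mpr (Fin.pos_iff_ne_zero.mp (lt_of_le_of_lt (Fin.zero_le i) hij))
  obtain ⟨k', rfl⟩ := Fin.exists_succ_eq.mpr (Fin.pos_iff_ne_zero.mp (lt_of_le_of_lt (Fin.zero_le j'.succ) hjk))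
  induction i using Fin.cases with
  | zero =>
    simp only [F_zero, F_succ] at heq hlt
    have hk0 : σ k' = 0 := g_eq_zero.mp heq.symm
    have hj0 : σ j' ≠ 0 := by
      intro h
      rw [hk0, h] at hlt
      simp [g] at hlt
    have hn : 0 < n := k'.pos
    have hz : σ ⟨0, hn⟩ = 0 := Nat.le_zero.mp (hb ⟨0, hn⟩)
    have hjpos : (⟨0, hn⟩ : Fin n) < j' := by
      rcases Nat.eq_zero_or_pos j'.val with h | h
      · exact absurd (Nat.le_zero.mp (h ▸ hb j')) hj0
      · exact h
    exact h0 ⟨⟨0, hn⟩, j', k', hjpos, Fin.succ_lt_succ_iff.mp hjk,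
      by rw [hz, hk0], by rw [hk0]; omega⟩
  | succ i' =>
    simp only [F_succ] at heq hlt
    exact h0 ⟨i', j', k', Fin.succ_lt_succ_iff.mp hij, Fin.succ_lt_succ_iff.mp hjk,
      g_eq_iff.mp heq, g_lt_iff.mp hlt⟩

lemma not102_F {n : ℕ} {σ : Fin n → ℕ}
    (h1 : ¬ Contains102 σ) : ¬ Contains102 (F σ) := by
  rintro ⟨i, j, k, hij, hjk, hlt1, hlt2⟩
  obtain ⟨j', rfl⟩ := Fin.exists_succ_eq.mpr (Fin.pos_iff_ne_zero.mp (lt_of_le_of_lt (Fin.zero_le i) hij))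
  obtain ⟨k', rfl⟩ := Fin.exists_succ_eq.mpr (Fin.pos_iff_ne_zero.mp (lt_of_le_of_lt (Fin.zero_le j'.succ) hjk))
  induction i using Fin.cases with
  | zero => simp only [F_zero, F_succ] at hlt1; omega
  | succ i' =>
    simp only [F_succ] at hlt1 hlt2
    exact h1 ⟨i', j', k', Fin.succ_lt_succ_iff.mp hij, Fin.succ_lt_succ_iff.mp hjk,
      g_lt_iff.mp hlt1, g_lt_iff.mp hlt2⟩

lemma not010_G {n : ℕ} {τ : Fin (n + 1) → ℕ} (h2 : ∀ j, τ j ≠ 1)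
    (h0 : ¬ Contains010 τ) : ¬ Contains010 (G τ) := by
  rintro ⟨i, j, k, hij, hjk, heq, hlt⟩
  exact h0 ⟨i.succ, j.succ, k.succ, Fin.succ_lt_succ_iff.mpr hij,
    Fin.succ_lt_succ_iff.mpr hjk,
    (h_eq_iff (h2 _) (h2 _)).mp heq, (h_lt_iff (h2 _) (h2 _)).mp hlt⟩

lemma not102_G {n : ℕ} {τ : Fin (n + 1) → ℕ} (h2 : ∀ j, τ j ≠ 1)
    (h1 : ¬ Contains102 τ) : ¬ Contains102 (G τ) := by
  rintro ⟨i, j, k, hij, hjk, hlt1, hlt2⟩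
  exact h1 ⟨i.succ, j.succ, k.succ, Fin.succ_lt_succ_iff.mpr hij,
    Fin.succ_lt_succ_iff.mpr hjk,
    (h_lt_iff (h2 _) (h2 _)).mp hlt1, (h_lt_iff (h2 _) (h2 _)).mp hlt2⟩

end CardAvoidAux

open CardAvoidAux in
theorem card_avoiders_eq (n : ℕ) :
    Nat.card {σ : Fin n → ℕ //
        (∀ i, σ i ≤ i.val) ∧ ¬ Contains010 σ ∧ ¬ Contains102 σ}
      = Nat.card {τ : Fin (n + 1) → ℕ //
          (∀ j, τ j ≤ j.val) ∧ ¬ Contains010 τ ∧ ¬ Contains102 τ ∧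
            ∀ j, τ j ≠ 1} := by
  apply Nat.card_congr
  refine
    { toFun := fun ⟨σ, hb, h0, h1⟩ => ⟨F σ, ?_, not010_F hb h0, not102_F h1, ?_⟩
      invFun := fun ⟨τ, hb, h0, h1, h2⟩ => ⟨G τ, ?_, not010_G h2 h0, not102_G h2 h1⟩
      left_inv := ?_
      right_inv := ?_ }
  · intro j
    induction j using Fin.cases with
    | zero => simp
    | succ i => simpa using le_trans (g_le (σ i)) (by simpa using Nat.succ_le_succ (hb i))
  · intro j
    induction j using Fin.cases with
    | zero => simp
    | succ i => simpa using g_ne_one (σ i)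
  · intro i
    have := hb i.succ
    simp only [G, Fin.val_succ] at *
    omega
  · rintro ⟨σ, hb, h0, h1⟩
    ext i
    simp [G, g_sub_one]
  · rintro ⟨τ, hb, h0, h1, h2⟩
    ext j
    induction j using Fin.cases with
    | zero =>
      have := hb 0
      simp only [F_zero, Fin.val_zero] at *
      omega
    | succ i => simp [G, g_of_sub_one (h2 i.succ)]
end

section
/- Let σ be an inversion sequence of size n ≥ 1 avoiding 010 and 102 which does not contain the value 1, and let z = |Zeros(σ)|. Then the set of positions i ∈ [2, n+1] at which inserting the value 1 yields an inversion sequence of size n+1 avoiding 010 and 102 equals { i ∈ [z+1, n+1] : min of (σ_j)_{j∈[z+1,i−1]} ≥ max of (σ_j)_{j∈[i,n]} } (with min over an empty range equal to +∞ and max over an empty range equal to −∞). -/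
/-!
The zeros of a `010`-avoiding inversion sequence form a prefix, of length `l.count 0`: the
sequence starts with `0`, and a zero after a nonzero entry would close a `010`. As there are no
`1`s, all later entries are at least `2`.

Every occurrence of `010` or `102` in `l.insertIdx p 1` that avoids position `p` is one in `l`, so
only occurrences through the new `1` matter. If `p` is inside the zero block, `0 1 0` occurs at
positions `0, p, p + 1`; if an entry `l[a] ≥ 2` with `a < p` is smaller than an entry `l[b]` with
`b ≥ p`, then `l[a] 1 l[b]` is a `102`. Conversely, since the new `1` equals no other entry, a
`010` through it would be `0 1 0` with a zero after position `p`; a `102` with the `1` first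
would also need a zero after `p`, and one with the `1` in the middle is `l[a] 1 l[b]` as above.
-/

/-- `l` is an inversion sequence (0-indexed: entry `i` is at most `i`). -/
def IsInvL (l : List ℕ) : Prop := ∀ i (h : i < l.length), l.get ⟨i, h⟩ ≤ i

def C010 (l : List ℕ) : Prop :=
  ∃ i j k, i < j ∧ j < k ∧ k < l.length ∧
    l.getD i 0 = l.getD k 0 ∧ l.getD k 0 < l.getD j 0

def C102 (l : List ℕ) : Prop :=
  ∃ i j k, i < j ∧ j < k ∧ k < l.length ∧
    l.getD j 0 < l.getD i 0 ∧ l.getD i 0 < l.getD k 0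

namespace List

variable {α : Type*} {l : List α} {i j : ℕ} {x d : α}

theorem getD_insertIdx_of_lt (h : j < i) : (l.insertIdx i x).getD j d = l.getD j d := by
  simp only [getD_eq_getElem?_getD, getElem?_insertIdx_of_lt h]

theorem getD_insertIdx_self (h : i ≤ l.length) : (l.insertIdx i x).getD i d = x := by
  simp [getD_eq_getElem?_getD, getElem?_insertIdx_self, h]

theorem getD_insertIdx_of_gt (h : i < j) : (l.insertIdx i x).getD j d = l.getD (j - 1) d := by
  simp only [getD_eq_getElem?_getD, getElem?_insertIdx_of_gt h]

theorem getD_insertIdx_of_ne (h : j ≠ i) :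
    (l.insertIdx i x).getD j d = l.getD (if j < i then j else j - 1) d := by
  split_ifs with hji
  · exact getD_insertIdx_of_lt hji
  · exact getD_insertIdx_of_gt (by omega)

theorem getD_insertIdx_mem_of_ne (hi : i ≤ l.length) (hj : j < l.length + 1) (h : j ≠ i) :
    (l.insertIdx i x).getD j d ∈ l := by
  rw [getD_insertIdx_of_ne h, getD_eq_getElem _ _ (by split_ifs <;> omega)]
  exact getElem_mem _

theorem exists_pattern_of_insertIdx (R : α → α → α → Prop) {p k : ℕ} (hp : p ≤ l.length)
    (hij : i < j) (hjk : j < k) (hk : k < l.length + 1)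
    (hip : i ≠ p) (hjp : j ≠ p) (hkp : k ≠ p)
    (h : R ((l.insertIdx p x).getD i d) ((l.insertIdx p x).getD j d)
      ((l.insertIdx p x).getD k d)) :
    ∃ i j k, i < j ∧ j < k ∧ k < l.length ∧ R (l.getD i d) (l.getD j d) (l.getD k d) := by
  rw [getD_insertIdx_of_ne hip, getD_insertIdx_of_ne hjp, getD_insertIdx_of_ne hkp] at h
  exact ⟨_, _, _, by split_ifs <;> omega, by split_ifs <;> omega, by split_ifs <;> omega, h⟩

theorem getElem_eq_iff_lt_count [DecidableEq α] {a : α}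
    (hclosed : ∀ j k (hk : k < l.length) (hjk : j < k), l[k] = a → l[j]'(hjk.trans hk) = a)
    {m : ℕ} (hm : m < l.length) : l[m] = a ↔ m < l.count a := by
  constructor
  · intro hma
    have htake : (l.take (m + 1)).count a = m + 1 := by
      rw [count_eq_length.mpr, length_take_of_le hm]
      intro b hb
      obtain ⟨t, ht, rfl⟩ := mem_iff_getElem.mp hb
      rw [length_take_of_le hm] at ht
      rw [getElem_take]
      obtain rfl | htm := eq_or_lt_of_le (Nat.lt_succ_iff.mp ht)
      · exact hma.symm
      · exact (hclosed t m hm htm hma).symm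
    calc m < m + 1 := m.lt_succ_self
      _ = (l.take (m + 1)).count a := htake.symm
      _ ≤ l.count a := (take_sublist _ _).count_le a
  · intro hlt
    by_contra hma
    have hdrop : (l.drop m).count a = 0 := by
      refine count_eq_zero.mpr fun hmem => ?_
      obtain ⟨t, ht, hta⟩ := mem_iff_getElem.mp hmem
      rw [getElem_drop] at hta
      rw [length_drop] at ht
      rcases Nat.eq_zero_or_pos t with rfl | htpos
      · exact hma hta
      · exact hma (hclosed m (m + t) (by omega) (by omega) hta)
    have hle : l.count a ≤ m := calc
      l.count a = (l.take m).count a + (l.drop m).count a := by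
        rw [← count_append, take_append_drop]
      _ ≤ m := by
        rw [hdrop, Nat.add_zero]
        exact count_le_length.trans (length_take_le _ _)
    omega

end List

open List

theorem isInvL_iff_getD_le {l : List ℕ} : IsInvL l ↔ ∀ i, l.getD i 0 ≤ i := by
  constructor
  · intro h i
    rcases lt_or_ge i l.length with hi | hi
    · rw [getD_eq_getElem _ _ hi]; exact h i hi
    · rw [getD_eq_default _ _ hi]; exact Nat.zero_le i
  · intro h i hi
    rw [get_eq_getElem, ← getD_eq_getElem _ 0 hi]
    exact h i

namespace IsInvL

variable {l : List ℕ}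

theorem insertIdx (hinv : IsInvL l) {p x : ℕ} (hxp : x ≤ p) : IsInvL (l.insertIdx p x) := by
  rw [isInvL_iff_getD_le] at hinv ⊢
  intro j
  rcases lt_trichotomy j p with hjp | rfl | hpj
  · rw [getD_insertIdx_of_lt hjp]; exact hinv j
  · by_cases hj : j ≤ l.length
    · rw [getD_insertIdx_self hj]; exact hxp
    · rw [insertIdx_of_length_lt (by omega)]; exact hinv j
  · rw [getD_insertIdx_of_gt hpj]; exact (hinv _).trans (Nat.sub_le _ _)

theorem getD_zero (hinv : IsInvL l) : l.getD 0 0 = 0 :=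
  Nat.le_zero.mp (isInvL_iff_getD_le.mp hinv 0)

theorem getD_eq_zero_iff_lt_count (hinv : IsInvL l) (h010 : ¬C010 l) {m : ℕ}
    (hm : m < l.length) : l.getD m 0 = 0 ↔ m < l.count 0 := by
  rw [getD_eq_getElem _ _ hm]
  refine getElem_eq_iff_lt_count (fun j k hk hjk hk0 => ?_) hm
  by_contra hj0
  obtain rfl | hj := Nat.eq_zero_or_pos j
  · exact hj0 (by rw [← getD_eq_getElem _ 0]; exact hinv.getD_zero)
  refine h010 ⟨0, j, k, hj, hjk, hk, ?_, ?_⟩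
  · rw [hinv.getD_zero, getD_eq_getElem _ _ hk, hk0]
  · rw [getD_eq_getElem _ _ hk, getD_eq_getElem _ _ (by omega), hk0]; omega

end IsInvL

section ActiveSites

variable {l : List ℕ} {p : ℕ}

theorem C010_insertIdx_of_lt {i k x : ℕ} (hip : i < p) (hpk : p ≤ k) (hk : k < l.length)
    (hik : l.getD i 0 = l.getD k 0) (hkx : l.getD k 0 < x) : C010 (l.insertIdx p x) := by
  refine ⟨i, p, k + 1, hip, by omega, by rw [length_insertIdx_of_le_length (by omega)]; omega,
    ?_, ?_⟩
  · rwa [getD_insertIdx_of_lt hip, getD_insertIdx_of_gt (by omega), Nat.add_sub_cancel]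
  · rwa [getD_insertIdx_self (by omega), getD_insertIdx_of_gt (by omega), Nat.add_sub_cancel]

theorem C102_insertIdx_of_lt {i k x : ℕ} (hip : i < p) (hpk : p ≤ k) (hk : k < l.length)
    (hxi : x < l.getD i 0) (hik : l.getD i 0 < l.getD k 0) : C102 (l.insertIdx p x) := by
  refine ⟨i, p, k + 1, hip, by omega, by rw [length_insertIdx_of_le_length (by omega)]; omega,
    ?_, ?_⟩
  · rwa [getD_insertIdx_of_lt hip, getD_insertIdx_self (by omega)]
  · rwa [getD_insertIdx_of_lt hip, getD_insertIdx_of_gt (by omega), Nat.add_sub_cancel]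

theorem one_lt_getD_of_count_le (hinv : IsInvL l) (h010 : ¬C010 l) (h1 : ∀ x ∈ l, x ≠ 1)
    {a : ℕ} (hza : l.count 0 ≤ a) (ha : a < l.length) : 1 < l.getD a 0 := by
  have hne0 : l.getD a 0 ≠ 0 := fun h => by
    have := (hinv.getD_eq_zero_iff_lt_count h010 ha).mp h; omega
  have hne1 : l.getD a 0 ≠ 1 := by
    rw [getD_eq_getElem _ _ ha]; exact h1 _ (getElem_mem _)
  omega

theorem lt_of_getD_insertIdx_eq_zero (hinv : IsInvL l) (h010 : ¬C010 l) (hzp : l.count 0 ≤ p)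
    {x k : ℕ} (hk : k < l.length + 1) (hkp : k ≠ p) (h : (l.insertIdx p x).getD k 0 = 0) :
    k < p := by
  by_contra hpk
  rw [getD_insertIdx_of_gt (by omega)] at h
  have := (hinv.getD_eq_zero_iff_lt_count h010 (by omega)).mp h
  omega

theorem not_C010_insertIdx_one (hinv : IsInvL l) (h010 : ¬C010 l) (h1 : ∀ x ∈ l, x ≠ 1)
    (hzp : l.count 0 ≤ p) (hp : p ≤ l.length) : ¬C010 (l.insertIdx p 1) := by
  rintro ⟨i, j, k, hij, hjk, hk, hik, hkj⟩
  rw [length_insertIdx_of_le_length hp] at hk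
  by_cases hip : i = p
  · subst hip
    rw [getD_insertIdx_self hp] at hik
    exact h1 _ (getD_insertIdx_mem_of_ne hp hk (by omega)) hik.symm
  by_cases hkp : k = p
  · subst hkp
    rw [getD_insertIdx_self hp] at hik
    exact h1 _ (getD_insertIdx_mem_of_ne hp (by omega) hip) hik
  by_cases hjp : j = p
  · subst hjp
    rw [getD_insertIdx_self hp] at hkj
    have := lt_of_getD_insertIdx_eq_zero hinv h010 hzp hk hkp (Nat.lt_one_iff.mp hkj)
    omega
  exact h010 (exists_pattern_of_insertIdx (fun a b c => a = c ∧ c < b) hp hij hjk hk hip hjp hkp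
    ⟨hik, hkj⟩)

theorem not_C102_insertIdx_one (hinv : IsInvL l) (h010 : ¬C010 l) (h102 : ¬C102 l)
    (hzp : l.count 0 ≤ p) (hp : p ≤ l.length)
    (hsep : ∀ a b, l.count 0 ≤ a → a < p → p ≤ b → b < l.length →
      l.getD b 0 ≤ l.getD a 0) :
    ¬C102 (l.insertIdx p 1) := by
  rintro ⟨i, j, k, hij, hjk, hk, hji, hik⟩
  rw [length_insertIdx_of_le_length hp] at hk
  by_cases hip : i = p
  · subst hip
    rw [getD_insertIdx_self hp] at hji
    have := lt_of_getD_insertIdx_eq_zero hinv h010 hzp (by omega) (by omega)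
      (Nat.lt_one_iff.mp hji)
    omega
  by_cases hjp : j = p
  · subst hjp
    rw [getD_insertIdx_self hp, getD_insertIdx_of_lt hij] at hji
    rw [getD_insertIdx_of_lt hij, getD_insertIdx_of_gt hjk] at hik
    have hzi : l.count 0 ≤ i := by
      by_contra hiz
      have := (hinv.getD_eq_zero_iff_lt_count h010 (m := i) (by omega)).mpr (by omega)
      omega
    have := hsep i (k - 1) hzi hij (by omega) (by omega)
    omega
  by_cases hkp : k = p
  · subst hkp
    rw [getD_insertIdx_self hp] at hik
    omega
  exact h102 (exists_pattern_of_insertIdx (fun a b c => b < a ∧ a < c) hp hij hjk hk hip hjp hkp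
    ⟨hji, hik⟩)

end ActiveSites

theorem active_sites_characterization_general (l : List ℕ) (hinv : IsInvL l)
    (h010 : ¬ C010 l) (h102 : ¬ C102 l)
    (h1 : ∀ x ∈ l, x ≠ 1)
    (p : ℕ) (hp1 : 1 ≤ p) (hp2 : p ≤ l.length) :
    (IsInvL (l.insertIdx p 1) ∧ ¬ C010 (l.insertIdx p 1) ∧
        ¬ C102 (l.insertIdx p 1)) ↔
      (l.count 0 ≤ p ∧ ∀ a b, l.count 0 ≤ a → a < p → p ≤ b → b < l.length →
        l.getD b 0 ≤ l.getD a 0) := by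
  constructor
  · rintro ⟨-, h010', h102'⟩
    have hzp : l.count 0 ≤ p := by
      by_contra! hpz
      have hp : p < l.length := hpz.trans_le count_le_length
      have hzero := hinv.getD_eq_zero_iff_lt_count h010 hp
      exact h010' (C010_insertIdx_of_lt hp1 le_rfl hp (by rw [hinv.getD_zero, hzero.mpr hpz])
        (by rw [hzero.mpr hpz]; exact Nat.one_pos))
    refine ⟨hzp, fun a b hza hap hpb hb => ?_⟩
    by_contra! hab
    exact h102' (C102_insertIdx_of_lt hap hpb hb
      (one_lt_getD_of_count_le hinv h010 h1 hza (by omega)) hab)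
  · rintro ⟨hzp, hsep⟩
    exact ⟨hinv.insertIdx hp1, not_C010_insertIdx_one hinv h010 h1 hzp hp2,
      not_C102_insertIdx_one hinv h010 h102 hzp hp2 hsep⟩

/-- Active sites of a `{010,102}`-avoiding inversion sequence with no entry equal
to 1: inserting a 1 at (0-indexed) position `p ∈ [1, n]` yields a `{010,102}`-
avoiding inversion sequence iff `p` is past the block of zeros and every entry
between the zeros and position `p` is at least every entry from position `p` on. -/
theorem active_sites_characterization (l : List ℕ) (hinv : IsInvL l)
    (hne : 1 ≤ l.length) (h010 : ¬ C010 l) (h102 : ¬ C102 l)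
    (h1 : ∀ x ∈ l, x ≠ 1)
    (p : ℕ) (hp1 : 1 ≤ p) (hp2 : p ≤ l.length) :
    (IsInvL (l.insertIdx p 1) ∧ ¬ C010 (l.insertIdx p 1) ∧
        ¬ C102 (l.insertIdx p 1)) ↔
      (l.count 0 ≤ p ∧ ∀ a b, l.count 0 ≤ a → a < p → p ≤ b → b < l.length →
        l.getD b 0 ≤ l.getD a 0) :=
  active_sites_characterization_general l hinv h010 h102 h1 p hp1 hp2
end

section
/- If σ is an inversion sequence avoiding 102 and σ has the form (0,...,0)·μ·(1,...,1)·ν where μ and ν are nonempty sequences of values ≥ 2, then min(μ) ≥ max(ν). -/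
lemma getD_skip (l1 l2 : List ℕ) (n k : ℕ) (hk : k = l1.length) :
    (l1 ++ l2).getD (k + n) 0 = l2.getD n 0 := by
  subst hk
  simp [List.getD, List.getElem?_append_right, Nat.add_sub_cancel_left]

lemma getD_in (l1 l2 : List ℕ) (n : ℕ) (h : n < l1.length) :
    (l1 ++ l2).getD n 0 = l1.getD n 0 := by
  simp [List.getD, List.getElem?_append_left h]

/-- If an inversion sequence avoiding 102 has the form
`(0,…,0) · μ · (1,…,1) · ν` with `μ`, `ν` nonempty blocks of values ≥ 2,
then `min μ ≥ max ν`. -/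
theorem min_mu_ge_max_nu (z o : ℕ) (hz : 1 ≤ z) (ho : 1 ≤ o)
    (μ ν : List ℕ) (hμ : μ ≠ []) (hν : ν ≠ [])
    (hμ2 : ∀ x ∈ μ, 2 ≤ x) (hν2 : ∀ x ∈ ν, 2 ≤ x)
    (hinv : IsInvL (List.replicate z 0 ++ μ ++ List.replicate o 1 ++ ν))
    (h102 : ¬ C102 (List.replicate z 0 ++ μ ++ List.replicate o 1 ++ ν)) :
    ∀ a ∈ μ, ∀ b ∈ ν, b ≤ a := by
  intro a ha b hb
  by_contra hba
  push_neg at hba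
  apply h102
  obtain ⟨n, hn, han⟩ := List.mem_iff_getElem.mp ha
  obtain ⟨m, hm, hbm⟩ := List.mem_iff_getElem.mp hb
  have ha2 := hμ2 a ha
  have e1 : (List.replicate z 0 ++ μ ++ List.replicate o 1 ++ ν).getD (z + n) 0 = a := by
    rw [List.append_assoc, List.append_assoc, getD_skip _ _ _ _ (by simp),
      getD_in _ _ _ hn, List.getD_eq_getElem _ _ hn, han]
  have e2 : (List.replicate z 0 ++ μ ++ List.replicate o 1 ++ ν).getD (z + μ.length) 0 = 1 := by
    rw [List.append_assoc, show z + μ.length = z + μ.length + 0 from rfl,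
      getD_skip _ _ _ _ (by simp), getD_in _ _ _ (by simp; omega)]
    obtain ⟨o', rfl⟩ := Nat.exists_eq_add_of_le ho
    simp
  have e3 : (List.replicate z 0 ++ μ ++ List.replicate o 1 ++ ν).getD (z + μ.length + o + m) 0 = b := by
    rw [getD_skip _ _ _ _ (by simp; omega), List.getD_eq_getElem _ _ hm, hbm]
  refine ⟨z + n, z + μ.length, z + μ.length + o + m, by omega, by omega, ?_, ?_, ?_⟩
  · simp only [List.length_append, List.length_replicate]; omega
  · rw [e1, e2]; omega
  · rw [e1, e3]; exact hba
end
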